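/- For any security view V = (D_v, ann), any instance T of the original DTD D with view T_v, any accessible element node n of T, and any element type B: the parent of n in the view T_v is of type B iff n ⊨ A^B in T, where A^B := A^+[1]/ε::B and A^+ := ↑+::*[A1^acc]. Equivalently, n has an accessible B element as its nearest accessible ancestor iff n ⊨ A^B. -/

import Mathlib

/-!
# Core model: XML documents, DTDs, XPath fragments and XML security views

Following the paper "XPath query rewriting over recursive XML security views":

* a DTD is a triple `(Ele, P, root)` with `P` mapping element types to regular expressions;
* XML documents are finite node-labeled ordered trees, nodes are identified with their
  positions (lists of child indices);
* the XPath syntax below is the full fragment `X↑[n,=]`; the sub-fragments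
  `X` (downward), `X↑`, `X↑[n]` are carved out by Boolean membership predicates;
* evaluation of paths/qualifiers is parametrized by an accessibility predicate `acc` on
  nodes: with `acc = fun _ => True` it is evaluation over the original document `T`, and
  with `acc = Accessible S T` it is evaluation over the (virtual) view `T_v` of `T`
  (nodes of `T_v` are identified with the accessible nodes of `T`, the parent in `T_v`
  being the nearest accessible ancestor in `T`);
* an access specification `S = (D, ann)` has a finite list of annotations with values
  `Y`, `N`, `[Q]`, and `ann(root) = Y` by default.
-/

abbrev Name := String

/-- Node labels: element labels, or text nodes carrying a string value. -/
inductive Lab where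
  | elem (a : Name)
  | text (s : String)
deriving DecidableEq

/-- Regular expressions for DTD content models. -/
inductive Regex where
  | str
  | eps
  | elem (b : Name)
  | cat (r₁ r₂ : Regex)
  | alt (r₁ r₂ : Regex)
  | star (r : Regex)

/-- `r.occurs B` : element type `B` occurs in the regular expression `r`. -/
def Regex.occurs : Regex → Name → Prop
  | .str, _ => False
  | .eps, _ => False
  | .elem b, B => b = B
  | .cat r₁ r₂, B => r₁.occurs B ∨ r₂.occurs B
  | .alt r₁ r₂, B => r₁.occurs B ∨ r₂.occurs B
  | .star r, B => r.occurs B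

/-- Size of a regular expression: number of subelement types and operators. -/
def Regex.size : Regex → ℕ
  | .str => 1
  | .eps => 1
  | .elem _ => 1
  | .cat r₁ r₂ => r₁.size + r₂.size + 1
  | .alt r₁ r₂ => r₁.size + r₂.size + 1
  | .star r => r.size + 1

/-- The language of a regular expression, over words of labels
(`str` matches any single text node). -/
def Regex.Matches : Regex → List Lab → Prop
  | .str, w => ∃ s, w = [Lab.text s]
  | .eps, w => w = []
  | .elem b, w => w = [Lab.elem b]
  | .cat r₁ r₂, w => ∃ u v, w = u ++ v ∧ r₁.Matches u ∧ r₂.Matches v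
  | .alt r₁ r₂, w => r₁.Matches w ∨ r₂.Matches w
  | .star r, w => ∃ ws : List (List Lab), (∀ u ∈ ws, r.Matches u) ∧ w = ws.flatten

/-- A DTD `D = (Ele, P, root)`. -/
structure DTD where
  Ele : Finset Name
  root : Name
  P : Name → Regex
  root_mem : root ∈ Ele
  /-- each production `P(A)` is a regular expression over `Ele` -/
  occ_mem : ∀ A ∈ Ele, ∀ B, (P A).occurs B → B ∈ Ele

/-- A DTD is recursive iff some element type is defined, directly or indirectly,
in terms of itself. -/
def DTD.Recursive (D : DTD) : Prop :=
  ∃ A, Relation.TransGen (fun X Y => (D.P X).occurs Y) A A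

/-- Finite node-labeled ordered trees (XML trees). -/
inductive XTree where
  | mk (lab : Lab) (children : List XTree)

def XTree.lab : XTree → Lab
  | .mk l _ => l

def XTree.children : XTree → List XTree
  | .mk _ c => c

/-- Node positions: paths of child indices from the root (the root is `[]`). -/
abbrev Pos := List ℕ

/-- The subtree of `t` at position `p`, if it exists. -/
def XTree.sub? : XTree → Pos → Option XTree
  | t, [] => some t
  | t, i :: p =>
    match t.children[i]? with
    | some c => XTree.sub? c p
    | none => none

/-- `n` is a node of `t`. -/
def XTree.IsNode (t : XTree) (n : Pos) : Prop := (t.sub? n).isSome = true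

/-- Element type of the node at position `n` (none for text nodes / non-nodes). -/
def typeAt (t : XTree) (n : Pos) : Option Name :=
  match t.sub? n with
  | some s =>
    match s.lab with
    | .elem a => some a
    | _ => none
  | none => none

/-- The element at position `n` has `c` as text content (a text child with value `c`). -/
def HasText (t : XTree) (n : Pos) (c : String) : Prop :=
  ∃ s, t.sub? n = some s ∧ Lab.text c ∈ s.children.map XTree.lab

/-- `m` is a strict ancestor of `n`. -/
def StrictAnc (m n : Pos) : Prop := m <+: n ∧ m ≠ n

/-- Document order on positions (lexicographic; an ancestor precedes its descendants). -/
def posLt (m n : Pos) : Prop := List.Lex (· < ·) m n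

/-- Parent position. -/
def parentPos (n : Pos) : Pos := n.dropLast

/-- `T` conforms to `D` (`T` is an instance of `D`): the root is the unique node
labeled `root`, every node is labeled with an element type of `D` or with text,
the children word of each `A`-node matches `P(A)`, and text nodes are leaves. -/
def Conforms (t : XTree) (D : DTD) : Prop :=
  t.lab = Lab.elem D.root ∧
  (∀ n s, t.sub? n = some s → s.lab = Lab.elem D.root → n = []) ∧
  (∀ n s, t.sub? n = some s →
      (∃ A, s.lab = Lab.elem A ∧ A ∈ D.Ele) ∨ ∃ c, s.lab = Lab.text c) ∧
  (∀ n s A, t.sub? n = some s → s.lab = Lab.elem A →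
      (D.P A).Matches (s.children.map XTree.lab)) ∧
  (∀ n s c, t.sub? n = some s → s.lab = Lab.text c → s.children = [])

/-! ## XPath syntax: the full fragment `X↑[n,=]` -/

inductive Axis where
  | child | descendant | self | parent | ancestor | ancestorOrSelf
deriving DecidableEq

inductive NodeTest where
  | name (a : Name)
  | star
deriving DecidableEq

mutual
  /-- XPath paths (the full fragment `X↑[n,=]`): steps, filters `p[q]`,
  position predicates `p[k]`, composition `p/p` and union `p ∪ p`. -/
  inductive XPath where
    | axis (ax : Axis) (nt : NodeTest)
    | filter (p : XPath) (q : XQual)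
    | pos (p : XPath) (k : ℕ)
    | seq (p₁ p₂ : XPath)
    | union (p₁ p₂ : XPath)
  /-- XPath qualifiers: paths, text comparison `p = c`, node comparison
  `[p₁ = p₂]`, and Boolean combinations. -/
  inductive XQual where
    | path (p : XPath)
    | cmp (p : XPath) (c : String)
    | nodeEq (p₁ p₂ : XPath)
    | and (q₁ q₂ : XQual)
    | or (q₁ q₂ : XQual)
    | not (q : XQual)
end

def Axis.downb : Axis → Bool
  | .child => true
  | .descendant => true
  | _ => false

mutual
  /-- Membership in the downward fragment `X` (only `↓`, `↓⁺`, no position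
  predicate, no node comparison). -/
  def XPath.inXb : XPath → Bool
    | .axis ax _ => ax.downb
    | .filter p q => p.inXb && q.inXb
    | .pos _ _ => false
    | .seq p₁ p₂ => p₁.inXb && p₂.inXb
    | .union p₁ p₂ => p₁.inXb && p₂.inXb
  def XQual.inXb : XQual → Bool
    | .path p => p.inXb
    | .cmp p _ => p.inXb
    | .nodeEq _ _ => false
    | .and q₁ q₂ => q₁.inXb && q₂.inXb
    | .or q₁ q₂ => q₁.inXb && q₂.inXb
    | .not q => q.inXb
end

mutual
  /-- Membership in `X↑` (`X` plus the self and upward axes). -/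
  def XPath.inXUpb : XPath → Bool
    | .axis _ _ => true
    | .filter p q => p.inXUpb && q.inXUpb
    | .pos _ _ => false
    | .seq p₁ p₂ => p₁.inXUpb && p₂.inXUpb
    | .union p₁ p₂ => p₁.inXUpb && p₂.inXUpb
  def XQual.inXUpb : XQual → Bool
    | .path p => p.inXUpb
    | .cmp p _ => p.inXUpb
    | .nodeEq _ _ => false
    | .and q₁ q₂ => q₁.inXUpb && q₂.inXUpb
    | .or q₁ q₂ => q₁.inXUpb && q₂.inXUpb
    | .not q => q.inXUpb
end

mutual
  /-- Membership in `X↑[n]` (`X↑` plus the position predicate; no node comparison). -/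
  def XPath.inXUpPosb : XPath → Bool
    | .axis _ _ => true
    | .filter p q => p.inXUpPosb && q.inXUpPosb
    | .pos p _ => p.inXUpPosb
    | .seq p₁ p₂ => p₁.inXUpPosb && p₂.inXUpPosb
    | .union p₁ p₂ => p₁.inXUpPosb && p₂.inXUpPosb
  def XQual.inXUpPosb : XQual → Bool
    | .path p => p.inXUpPosb
    | .cmp p _ => p.inXUpPosb
    | .nodeEq _ _ => false
    | .and q₁ q₂ => q₁.inXUpPosb && q₂.inXUpPosb
    | .or q₁ q₂ => q₁.inXUpPosb && q₂.inXUpPosb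
    | .not q => q.inXUpPosb
end

mutual
  /-- The element-type names occurring in a path. -/
  def XPath.names : XPath → List Name
    | .axis _ (.name a) => [a]
    | .axis _ .star => []
    | .filter p q => p.names ++ q.names
    | .pos p _ => p.names
    | .seq p₁ p₂ => p₁.names ++ p₂.names
    | .union p₁ p₂ => p₁.names ++ p₂.names
  def XQual.names : XQual → List Name
    | .path p => p.names
    | .cmp p _ => p.names
    | .nodeEq p₁ p₂ => p₁.names ++ p₂.names
    | .and q₁ q₂ => q₁.names ++ q₂.names
    | .or q₁ q₂ => q₁.names ++ q₂.names
    | .not q => q.names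
end

/-! ## XPath semantics, parametrized by an accessibility predicate -/

def TestOk (t : XTree) (nt : NodeTest) (y : Pos) : Prop :=
  match nt with
  | .name a => typeAt t y = some a
  | .star => (typeAt t y).isSome = true

/-- Axis relations in the tree restricted to `acc`-nodes: the child relation is
"nearest accessible descendant", etc. (with `acc = fun _ => True` these are the
usual axes of the original document). -/
def AxisRel (acc : Pos → Prop) : Axis → Pos → Pos → Prop
  | .self, x, y => y = x
  | .child, x, y => StrictAnc x y ∧ acc y ∧ ∀ z, StrictAnc x z → StrictAnc z y → ¬ acc z
  | .descendant, x, y => StrictAnc x y ∧ acc y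
  | .parent, x, y => StrictAnc y x ∧ acc y ∧ ∀ z, StrictAnc y z → StrictAnc z x → ¬ acc z
  | .ancestor, x, y => StrictAnc y x ∧ acc y
  | .ancestorOrSelf, x, y => (y = x ∨ StrictAnc y x) ∧ acc y

/-- The `k`-th node (1-indexed) of an (ordered) node set; reverse axes produce their
results nearest-first, so the order used here is reverse document order. -/
noncomputable def nthRev (Sp : Set Pos) (k : ℕ) : Set Pos :=
  {x | x ∈ Sp ∧ ({y | y ∈ Sp ∧ posLt x y}).ncard = k - 1}

mutual
  /-- `evalP t acc p x` : the node set `x⟦p⟧` obtained by evaluating path `p`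
  at context node `x`, in the document `t` restricted to `acc`-nodes. -/
  noncomputable def evalP (t : XTree) (acc : Pos → Prop) : XPath → Pos → Set Pos
    | .axis ax nt, x => {y | t.IsNode y ∧ AxisRel acc ax x y ∧ TestOk t nt y}
    | .filter p q, x => {y | y ∈ evalP t acc p x ∧ evalQ t acc q y}
    | .pos p k, x => nthRev (evalP t acc p x) k
    | .seq p₁ p₂, x => {z | ∃ y, y ∈ evalP t acc p₁ x ∧ z ∈ evalP t acc p₂ y}
    | .union p₁ p₂, x => evalP t acc p₁ x ∪ evalP t acc p₂ x
  /-- `evalQ t acc q x` : the qualifier `q` holds at context node `x` (`x ⊨ q`). -/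
  noncomputable def evalQ (t : XTree) (acc : Pos → Prop) : XQual → Pos → Prop
    | .path p, x => (evalP t acc p x).Nonempty
    | .cmp p c, x => ∃ y, y ∈ evalP t acc p x ∧ HasText t y c
    | .nodeEq p₁ p₂, x => ∃ y, evalP t acc p₁ x = {y} ∧ evalP t acc p₂ x = {y}
    | .and q₁ q₂, x => evalQ t acc q₁ x ∧ evalQ t acc q₂ x
    | .or q₁ q₂, x => evalQ t acc q₁ x ∨ evalQ t acc q₂ x
    | .not q, x => ¬ evalQ t acc q x
end

/-! ## Access specifications, accessibility, security views -/

/-- Annotation values `Y`, `N`, `[Q]`. -/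
inductive AnnVal where
  | Y
  | N
  | cond (q : XQual)

/-- An access specification `S = (D, ann)`: `ann` is a finite partial map given as a
list of triples `(A, B, ann(A,B))`, defined only on productions of `D`, with
qualifiers taken from the downward fragment `X`; `ann(root) = Y` by default. -/
structure AccessSpec where
  D : DTD
  ann : List (Name × Name × AnnVal)
  ann_nodup : (ann.map fun e => (e.1, e.2.1)).Nodup
  ann_dom : ∀ e ∈ ann, e.1 ∈ D.Ele ∧ (D.P e.1).occurs e.2.1
  ann_X : ∀ e ∈ ann, ∀ q, e.2.2 = AnnVal.cond q → q.inXb = true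

/-- `ann(A,B)`, if defined. -/
def AccessSpec.lookup (S : AccessSpec) (A B : Name) : Option AnnVal :=
  (S.ann.find? fun e => e.1 == A && e.2.1 == B).map fun e => e.2.2

/-- Node `n` (of type `B`, with parent of type `A`) is concerned by the
annotation value `v` : `ann(A,B) = v`. -/
def ConcernedBy (S : AccessSpec) (t : XTree) (n : Pos) (v : AnnVal) : Prop :=
  ∃ A B, n ≠ [] ∧ typeAt t n = some B ∧ typeAt t (parentPos n) = some A ∧
    S.lookup A B = some v

/-- Node `n` is concerned by an annotation. -/
def Concerned (S : AccessSpec) (t : XTree) (n : Pos) : Prop := ∃ v, ConcernedBy S t n v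

/-- The annotation concerning `n` is valid at `n` : its value is `Y`, or it is
`[Q]` and `n ⊨ Q` (annotation qualifiers are evaluated over the original document). -/
def ValidAnnAt (S : AccessSpec) (t : XTree) (n : Pos) : Prop :=
  ConcernedBy S t n AnnVal.Y ∨
    ∃ q, ConcernedBy S t n (AnnVal.cond q) ∧ evalQ t (fun _ => True) q n

/-- Concerned, treating the root as concerned by the default annotation `ann(root) = Y`. -/
def ConcernedR (S : AccessSpec) (t : XTree) (n : Pos) : Prop := n = [] ∨ Concerned S t n

/-- Valid annotation, the root's default annotation being valid. -/
def ValidR (S : AccessSpec) (t : XTree) (n : Pos) : Prop := n = [] ∨ ValidAnnAt S t n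

/-- Condition (i) of the accessibility definition: `n` is concerned by a valid
annotation, or `n` is not concerned by an annotation and the first (nearest)
ancestor of `n` concerned by an annotation has that annotation valid at it. -/
def CondI (S : AccessSpec) (t : XTree) (n : Pos) : Prop :=
  (ConcernedR S t n ∧ ValidR S t n) ∨
    (¬ ConcernedR S t n ∧ ∃ m, StrictAnc m n ∧ ConcernedR S t m ∧ ValidR S t m ∧
      ∀ m', StrictAnc m m' → StrictAnc m' n → ¬ Concerned S t m')

/-- Condition (ii): every ancestor concerned by an annotation `[Q']` satisfies `Q'`. -/
def CondII (S : AccessSpec) (t : XTree) (n : Pos) : Prop :=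
  ∀ m q, StrictAnc m n → ConcernedBy S t m (AnnVal.cond q) →
    evalQ t (fun _ => True) q m

/-- Node `n` of the instance `T` is accessible w.r.t. the access specification `S`. -/
def Accessible (S : AccessSpec) (t : XTree) (n : Pos) : Prop :=
  t.IsNode n ∧ CondI S t n ∧ CondII S t n

/-- The element types of the DTD view `D_v` (the element types of `D` that are not
eliminated): the root, and every type reachable from an accessible type through a
production edge not annotated `N`. -/
inductive AccType (S : AccessSpec) : Name → Prop where
  | root : AccType S S.D.root
  | step {A B : Name} : AccType S A → (S.D.P A).occurs B →
      S.lookup A B ≠ some AnnVal.N → AccType S B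

/-- `B` is a child type of `A` in the DTD view (element types hidden in between
are spliced out). -/
inductive ViewChild (S : AccessSpec) : Name → Name → Prop where
  | direct {A B} : (S.D.P A).occurs B → S.lookup A B ≠ some AnnVal.N → ViewChild S A B
  | through {A C B} : (S.D.P A).occurs C → S.lookup A C = some AnnVal.N →
      ViewChild S C B → ViewChild S A B

/-- The child-type relation of the DTD view `D_v`. -/
def ViewChildV (S : AccessSpec) (A B : Name) : Prop :=
  AccType S A ∧ AccType S B ∧ ViewChild S A B

/-- The security view `V = (D_v, ann)` is recursive: its DTD view `D_v` is recursive. -/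
def ViewRecursive (S : AccessSpec) : Prop :=
  ∃ A, Relation.TransGen (ViewChildV S) A A

/-- `|D_v|` : the number of element types of the DTD view. -/
noncomputable def viewSize (S : AccessSpec) : ℕ :=
  {A | A ∈ S.D.Ele ∧ AccType S A}.ncard

/-- A query formulated over the DTD view `D_v` : all its element-type names are
element types of `D_v`. -/
def OverView (S : AccessSpec) (p : XPath) : Prop :=
  ∀ a ∈ p.names, AccType S a

/-- `Q(T_v)` : evaluation of `Q` over the (virtual) view `T_v` of `T`, nodes of `T_v`
being identified with the accessible nodes of `T`. -/
noncomputable def evalView (S : AccessSpec) (t : XTree) (p : XPath) (x : Pos) : Set Pos :=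
  evalP t (Accessible S t) p x

/-- `Q(T)` : evaluation of `Q` over the original document `T`. -/
noncomputable def evalFull (t : XTree) (p : XPath) (x : Pos) : Set Pos :=
  evalP t (fun _ => True) p x

/-! ## The predicates `A₁^acc`, `A₂^acc`, `A^acc`, `A⁺`, `A^B` -/

/-- A trivially true qualifier (at element nodes). -/
def qTrue : XQual := XQual.path (XPath.axis Axis.self NodeTest.star)

/-- `ε::A/↑::A'` for an annotation entry `ann(A',A)` (entry `(A', A, v)`). -/
def annStep (e : Name × Name × AnnVal) : XQual :=
  XQual.path (XPath.seq (XPath.axis Axis.self (NodeTest.name e.2.1))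
    (XPath.axis Axis.parent (NodeTest.name e.1)))

/-- `ε::A.σ(A',A)/↑::A'` : `ε::A[Q]/↑::A'` if `ann(A',A) = [Q]`, `ε::A/↑::A'` if
`ann(A',A) = Y`, nothing if `ann(A',A) = N`. -/
def annStepSigma (e : Name × Name × AnnVal) : Option XQual :=
  match e.2.2 with
  | AnnVal.Y => some (annStep e)
  | AnnVal.cond q => some (XQual.path (XPath.seq
      (XPath.filter (XPath.axis Axis.self (NodeTest.name e.2.1)) q)
      (XPath.axis Axis.parent (NodeTest.name e.1))))
  | AnnVal.N => none

/-- `ε::root ∨_{ann(A',A) ∈ ann} ε::A/↑::A'`. -/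
def qual1 (S : AccessSpec) : XQual :=
  S.ann.foldr (fun e q => XQual.or (annStep e) q)
    (XQual.path (XPath.axis Axis.self (NodeTest.name S.D.root)))

/-- `ε::root ∨_{ann(A',A) = Y | [Q]} ε::A.σ(A',A)/↑::A'`. -/
def qual2 (S : AccessSpec) : XQual :=
  S.ann.foldr
    (fun e q => match annStepSigma e with | some s => XQual.or s q | none => q)
    (XQual.path (XPath.axis Axis.self (NodeTest.name S.D.root)))

/-- `A₁^acc := ↑*::*[qual1][1][qual2]`. -/
def A1acc (S : AccessSpec) : XPath :=
  XPath.filter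
    (XPath.pos (XPath.filter (XPath.axis Axis.ancestorOrSelf NodeTest.star) (qual1 S)) 1)
    (qual2 S)

/-- `A₂^acc := ⋀_{ann(A',A) = [Q]} not (↑⁺::A[not Q]/↑::A')`. -/
def A2acc (S : AccessSpec) : XQual :=
  S.ann.foldr
    (fun e q => match e.2.2 with
      | AnnVal.cond qq => XQual.and (XQual.not (XQual.path (XPath.seq
          (XPath.filter (XPath.axis Axis.ancestor (NodeTest.name e.2.1)) (XQual.not qq))
          (XPath.axis Axis.parent (NodeTest.name e.1))))) q
      | _ => q)
    qTrue

/-- The accessibility predicate `A^acc := A₁^acc ∧ A₂^acc`. -/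
def Aacc (S : AccessSpec) : XQual := XQual.and (XQual.path (A1acc S)) (A2acc S)

/-- `A⁺ := ↑⁺::*[A₁^acc]` (the accessible ancestors, nearest first). -/
def Aplus (S : AccessSpec) : XPath :=
  XPath.filter (XPath.axis Axis.ancestor NodeTest.star) (XQual.path (A1acc S))

/-- `A^B := A⁺[1]/ε::B`. -/
def AB (S : AccessSpec) (B : Name) : XPath :=
  XPath.seq (XPath.pos (Aplus S) 1) (XPath.axis Axis.self (NodeTest.name B))

/-!
Along the ancestor axis of a node, reverse document order is the order by depth, so the
position predicate `[1]` picks the deepest node of a set of ancestors. Hence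
`↑*::*[qual1][1]` is the nearest ancestor-or-self concerned by an annotation, and
`A₁^acc` checks that this annotation is valid there, which is condition (i). At a strict
ancestor of an accessible node, condition (ii) is inherited from that node, so `A⁺`
evaluates to the accessible strict ancestors, and `A⁺[1]` to the nearest one: the parent
in the view.
-/

lemma StrictAnc.length_lt {m n : Pos} (h : StrictAnc m n) : m.length < n.length :=
  lt_of_le_of_ne h.1.length_le fun hl => h.2 (h.1.eq_of_length hl)

lemma StrictAnc.not_prefix {m n : Pos} (h : StrictAnc m n) : ¬ n <+: m := fun hnm =>
  h.2 (h.1.eq_of_length (le_antisymm h.1.length_le hnm.length_le))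

lemma StrictAnc.trans_prefix {a b c : Pos} (hab : StrictAnc a b) (hbc : b <+: c) :
    StrictAnc a c := by
  refine ⟨hab.1.trans hbc, ?_⟩
  rintro rfl
  exact hab.not_prefix hbc

lemma prefix_iff_eq_or_strictAnc {m n : Pos} : m <+: n ↔ m = n ∨ StrictAnc m n := by
  by_cases h : m = n <;> simp [StrictAnc, h]

lemma prefix_iff_length_le_of_prefix {x y n : Pos} (hx : x <+: n) (hy : y <+: n) :
    x <+: y ↔ x.length ≤ y.length :=
  ⟨List.IsPrefix.length_le, List.prefix_of_prefix_length_le hx hy⟩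

lemma isParent_iff_eq_parentPos {z y : Pos} :
    (StrictAnc z y ∧ ∀ w, StrictAnc z w → ¬ StrictAnc w y) ↔
      y ≠ [] ∧ z = parentPos y := by
  have hlen : (parentPos y).length = y.length - 1 := List.length_dropLast
  have hpy : parentPos y <+: y := List.dropLast_prefix y
  constructor
  · rintro ⟨hzy, hnear⟩
    have hy : y ≠ [] := by
      rintro rfl
      exact hzy.2 (List.prefix_nil.mp hzy.1)
    have hzp : z <+: parentPos y :=
      List.prefix_of_prefix_length_le hzy.1 hpy (by have := hzy.length_lt; omega)
    refine ⟨hy, by_contra fun hne => hnear _ ⟨hzp, hne⟩ ⟨hpy, fun h => ?_⟩⟩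
    have := List.length_pos_iff.mpr hy
    have := congrArg List.length h
    omega
  · rintro ⟨hy, rfl⟩
    have hlt := List.length_pos_iff.mpr hy
    refine ⟨⟨hpy, fun h => by have := congrArg List.length h; omega⟩, fun w hpw hwy => ?_⟩
    have := hpw.length_lt
    have := hwy.length_lt
    omega

lemma posLt_of_strictAnc {m n : Pos} (h : StrictAnc m n) : posLt m n := by
  obtain ⟨⟨_ | ⟨a, r⟩, rfl⟩, hne⟩ := h
  · simp at hne
  · clear hne
    induction m with
    | nil => exact List.Lex.nil
    | cons b m ih => exact List.Lex.cons ih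

lemma posLt_iff_strictAnc_of_prefix {x y n : Pos} (hx : x <+: n) (hy : y <+: n) :
    posLt x y ↔ StrictAnc x y := by
  refine ⟨fun h => ?_, posLt_of_strictAnc⟩
  rcases List.prefix_or_prefix_of_prefix hx hy with hxy | hyx
  · exact ⟨hxy, by rintro rfl; exact irrefl_of (List.Lex (· < ·)) x h⟩
  · rcases eq_or_ne y x with rfl | hne
    · exact absurd h (irrefl_of (List.Lex (· < ·)) y)
    · exact absurd (posLt_of_strictAnc ⟨hyx, hne⟩) (asymm_of (List.Lex (· < ·)) h)

lemma finite_setOf_prefix (n : Pos) : {y : Pos | y <+: n}.Finite := by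
  refine ((Set.finite_Iic n.length).image (n.take ·)).subset fun y hy => ?_
  exact ⟨y.length, hy.length_le, (List.prefix_iff_eq_take.mp hy).symm⟩

lemma mem_nthRev_one_iff {Sp : Set Pos} {n : Pos} (hsub : ∀ y ∈ Sp, y <+: n) (x : Pos) :
    x ∈ nthRev Sp 1 ↔ x ∈ Sp ∧ ∀ y ∈ Sp, ¬ StrictAnc x y := by
  have hfin : {y | y ∈ Sp ∧ posLt x y}.Finite :=
    (finite_setOf_prefix n).subset fun y hy => hsub y hy.1
  simp only [nthRev, Nat.sub_self, Set.mem_ofPred_eq, Set.ncard_eq_zero hfin,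
    Set.eq_empty_iff_forall_notMem, not_and]
  refine and_congr_right fun hx => forall₂_congr fun y hy => ?_
  rw [posLt_iff_strictAnc_of_prefix (hsub x hx) (hsub y hy)]

lemma exists_deepest_of_prefix {Sp : Set Pos} {n : Pos} (hsub : ∀ y ∈ Sp, y <+: n)
    (hne : Sp.Nonempty) : ∃ x ∈ Sp, ∀ y ∈ Sp, y <+: x := by
  obtain ⟨x, hx, hmax⟩ :=
    Set.exists_max_image Sp List.length ((finite_setOf_prefix n).subset hsub) hne
  exact ⟨x, hx, fun y hy =>
    (prefix_iff_length_le_of_prefix (hsub y hy) (hsub x hx)).2 (hmax y hy)⟩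

lemma nthRev_one_eq_singleton {Sp : Set Pos} {n x₀ : Pos} (hsub : ∀ y ∈ Sp, y <+: n)
    (hx₀ : x₀ ∈ Sp) (hdeep : ∀ y ∈ Sp, y <+: x₀) : nthRev Sp 1 = {x₀} := by
  ext x
  rw [mem_nthRev_one_iff hsub, Set.mem_singleton_iff]
  constructor
  · rintro ⟨hx, hxd⟩
    exact by_contra fun hne => hxd x₀ hx₀ ⟨hdeep x hx, hne⟩
  · rintro rfl
    exact ⟨hx₀, fun y hy h => h.not_prefix (hdeep y hy)⟩

lemma XTree.sub?_append (t : XTree) (p q : Pos) :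
    t.sub? (p ++ q) = (t.sub? p).bind (·.sub? q) := by
  induction p generalizing t with
  | nil => simp [XTree.sub?]
  | cons i p ih =>
    simp only [List.cons_append, XTree.sub?]
    cases t.children[i]? with
    | none => rfl
    | some c => exact ih c

lemma XTree.IsNode.of_prefix {t : XTree} {m n : Pos} (hn : t.IsNode n) (h : m <+: n) :
    t.IsNode m := by
  obtain ⟨r, rfl⟩ := h
  unfold XTree.IsNode at *
  rw [XTree.sub?_append] at hn
  cases hs : t.sub? m <;> simp_all

lemma typeAt_eq_some_iff {t : XTree} {m : Pos} {A : Name} :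
    typeAt t m = some A ↔ ∃ s, t.sub? m = some s ∧ s.lab = Lab.elem A := by
  unfold typeAt
  rcases t.sub? m with _ | ⟨⟨_ | _, _⟩⟩ <;> simp [XTree.lab]

lemma Conforms.typeAt_isSome_of_strictAnc {D : DTD} {T : XTree} (hT : Conforms T D)
    {m n : Pos} (hn : T.IsNode n) (h : StrictAnc m n) : (typeAt T m).isSome := by
  obtain ⟨⟨_ | ⟨i, r⟩, rfl⟩, hne⟩ := h
  · simp at hne
  unfold XTree.IsNode at hn
  rw [XTree.sub?_append] at hn
  cases hs : T.sub? m with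
  | none => simp [hs] at hn
  | some s =>
    have hchild : s.children ≠ [] := by
      intro hnil
      simp [hs, XTree.sub?, hnil] at hn
    rcases hT.2.2.1 m s hs with ⟨A, hA, -⟩ | ⟨c, hc⟩
    · simp [typeAt_eq_some_iff.mpr ⟨s, hs, hA⟩]
    · exact absurd (hT.2.2.2.2 m s c hs hc) hchild

lemma Conforms.typeAt_eq_root_iff {D : DTD} {T : XTree} (hT : Conforms T D) {y : Pos} :
    typeAt T y = some D.root ↔ y = [] := by
  refine ⟨fun h => ?_, ?_⟩
  · obtain ⟨s, hs, hl⟩ := typeAt_eq_some_iff.mp h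
    exact hT.2.1 y s hs hl
  · rintro rfl
    exact typeAt_eq_some_iff.mpr ⟨T, rfl, hT.1⟩

lemma AccessSpec.lookup_eq_some_iff (S : AccessSpec) {A B : Name} {v : AnnVal} :
    S.lookup A B = some v ↔ (A, B, v) ∈ S.ann := by
  unfold AccessSpec.lookup
  constructor
  · intro h
    obtain ⟨e, hf, rfl⟩ := Option.map_eq_some_iff.mp h
    have hp := List.find?_some hf
    simp only [Bool.and_eq_true, beq_iff_eq] at hp
    obtain ⟨A', B', v'⟩ := e
    obtain ⟨rfl, rfl⟩ := hp
    exact List.mem_of_find?_eq_some hf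
  · intro he
    cases hf : S.ann.find? (fun e => e.1 == A && e.2.1 == B) with
    | none => simpa using List.find?_eq_none.mp hf _ he
    | some e =>
      have hp := List.find?_some hf
      simp only [Bool.and_eq_true, beq_iff_eq] at hp
      have : e = (A, B, v) :=
        List.inj_on_of_nodup_map S.ann_nodup (List.mem_of_find?_eq_some hf) he
          (by simp [hp.1, hp.2])
      simp [this]

lemma concernedBy_iff {S : AccessSpec} {t : XTree} {n : Pos} {v : AnnVal} :
    ConcernedBy S t n v ↔ ∃ e ∈ S.ann, e.2.2 = v ∧
      n ≠ [] ∧ typeAt t n = some e.2.1 ∧ typeAt t (parentPos n) = some e.1 := by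
  simp only [ConcernedBy, AccessSpec.lookup_eq_some_iff, Prod.exists]
  aesop

lemma mem_evalP_self {t : XTree} {acc : Pos → Prop} {nt : NodeTest} {x y : Pos} :
    y ∈ evalP t acc (XPath.axis Axis.self nt) x ↔ y = x ∧ t.IsNode x ∧ TestOk t nt x := by
  simp only [evalP, AxisRel, Set.mem_ofPred_eq]
  aesop

lemma mem_evalP_parent {t : XTree} {nt : NodeTest} {x y : Pos} (hx : t.IsNode x) :
    y ∈ evalP t (fun _ => True) (XPath.axis Axis.parent nt) x ↔
      x ≠ [] ∧ y = parentPos x ∧ TestOk t nt y := by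
  simp only [evalP, AxisRel, not_true_eq_false, imp_false, true_and, Set.mem_ofPred_eq]
  rw [isParent_iff_eq_parentPos]
  constructor
  · exact fun ⟨_, h, hok⟩ => ⟨h.1, h.2, hok⟩
  · rintro ⟨hx0, rfl, hok⟩
    exact ⟨hx.of_prefix (List.dropLast_prefix x), ⟨hx0, rfl⟩, hok⟩

lemma mem_evalP_filter {t : XTree} {acc : Pos → Prop} {p : XPath} {q : XQual} {x y : Pos} :
    y ∈ evalP t acc (XPath.filter p q) x ↔ y ∈ evalP t acc p x ∧ evalQ t acc q y := by
  simp [evalP]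

lemma evalP_pos (t : XTree) (acc : Pos → Prop) (p : XPath) (k : ℕ) (x : Pos) :
    evalP t acc (XPath.pos p k) x = nthRev (evalP t acc p x) k := by
  simp [evalP]

lemma mem_evalP_seq {t : XTree} {acc : Pos → Prop} {p₁ p₂ : XPath} {x z : Pos} :
    z ∈ evalP t acc (XPath.seq p₁ p₂) x ↔
      ∃ y ∈ evalP t acc p₁ x, z ∈ evalP t acc p₂ y := by
  simp [evalP]

lemma evalQ_self_name {t : XTree} {acc : Pos → Prop} {a : Name} {y : Pos} :
    evalQ t acc (XQual.path (XPath.axis Axis.self (NodeTest.name a))) y ↔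
      t.IsNode y ∧ typeAt t y = some a := by
  simp [evalQ, evalP, AxisRel, TestOk, Set.Nonempty]

lemma evalQ_foldr_or (t : XTree) (acc : Pos → Prop) (l : List XQual) (base : XQual)
    (y : Pos) :
    evalQ t acc (l.foldr XQual.or base) y ↔
      (∃ q ∈ l, evalQ t acc q y) ∨ evalQ t acc base y := by
  induction l with
  | nil => simp
  | cons q l ih => simp [evalQ, ih, or_assoc]

lemma evalQ_seq_parent_name {t : XTree} {p : XPath} {A : Name} {y : Pos}
    (hp : ∀ w ∈ evalP t (fun _ => True) p y, t.IsNode w) :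
    evalQ t (fun _ => True)
        (XQual.path (XPath.seq p (XPath.axis Axis.parent (NodeTest.name A)))) y ↔
      ∃ w ∈ evalP t (fun _ => True) p y, w ≠ [] ∧ typeAt t (parentPos w) = some A := by
  simp only [evalQ, evalP, Set.Nonempty, Set.mem_ofPred_eq]
  constructor
  · rintro ⟨z, w, hw, hz⟩
    obtain ⟨hw0, rfl, hA⟩ := (mem_evalP_parent (hp w hw)).mp hz
    exact ⟨w, hw, hw0, hA⟩
  · rintro ⟨w, hw, hw0, hA⟩
    exact ⟨parentPos w, w, hw, (mem_evalP_parent (hp w hw)).mpr ⟨hw0, rfl, hA⟩⟩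

lemma evalQ_annStep {t : XTree} {e : Name × Name × AnnVal} {y : Pos} :
    evalQ t (fun _ => True) (annStep e) y ↔ t.IsNode y ∧ y ≠ [] ∧
      typeAt t y = some e.2.1 ∧ typeAt t (parentPos y) = some e.1 := by
  rw [annStep, evalQ_seq_parent_name fun w hw => by
    obtain ⟨rfl, hy, -⟩ := mem_evalP_self.mp hw
    exact hy]
  simp only [mem_evalP_self, TestOk]
  aesop

lemma evalQ_annStepSigma_cond {t : XTree} {A B : Name} {q : XQual} {y : Pos} {s : XQual}
    (hs : annStepSigma (A, B, AnnVal.cond q) = some s) :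
    evalQ t (fun _ => True) s y ↔ t.IsNode y ∧ y ≠ [] ∧ typeAt t y = some B ∧
      evalQ t (fun _ => True) q y ∧ typeAt t (parentPos y) = some A := by
  obtain rfl := (Option.some_injective _ hs).symm
  have hnode : ∀ w ∈ evalP t (fun _ => True)
      ((XPath.axis Axis.self (NodeTest.name B)).filter q) y, t.IsNode w := fun w hw => by
    obtain ⟨rfl, hy, -⟩ := mem_evalP_self.mp (mem_evalP_filter.mp hw).1
    exact hy
  rw [evalQ_seq_parent_name hnode]
  simp only [mem_evalP_filter, mem_evalP_self, TestOk]
  aesop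

lemma evalQ_qual1_iff {S : AccessSpec} {T : XTree} (hT : Conforms T S.D) {y : Pos}
    (hy : T.IsNode y) : evalQ T (fun _ => True) (qual1 S) y ↔ ConcernedR S T y := by
  rw [qual1, ← List.foldr_map, evalQ_foldr_or, evalQ_self_name, hT.typeAt_eq_root_iff]
  constructor
  · rintro (⟨_, hmem, hstep⟩ | ⟨-, hroot⟩)
    · obtain ⟨e, he, rfl⟩ := List.mem_map.mp hmem
      obtain ⟨-, hne, hB, hA⟩ := evalQ_annStep.mp hstep
      exact Or.inr ⟨e.2.2, concernedBy_iff.mpr ⟨e, he, rfl, hne, hB, hA⟩⟩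
    · exact Or.inl hroot
  · rintro (rfl | ⟨v, hv⟩)
    · exact Or.inr ⟨hy, rfl⟩
    · obtain ⟨e, he, -, hne, hB, hA⟩ := concernedBy_iff.mp hv
      exact Or.inl ⟨_, List.mem_map_of_mem he, evalQ_annStep.mpr ⟨hy, hne, hB, hA⟩⟩

lemma qual2_eq_foldr_filterMap (S : AccessSpec) :
    qual2 S = (S.ann.filterMap annStepSigma).foldr XQual.or
      (XQual.path (XPath.axis Axis.self (NodeTest.name S.D.root))) := by
  rw [List.foldr_filterMap, qual2]
  congr
  funext e q
  cases annStepSigma e <;> rfl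

lemma evalQ_qual2_iff {S : AccessSpec} {T : XTree} (hT : Conforms T S.D) {y : Pos}
    (hy : T.IsNode y) : evalQ T (fun _ => True) (qual2 S) y ↔ ValidR S T y := by
  rw [qual2_eq_foldr_filterMap, evalQ_foldr_or, evalQ_self_name, hT.typeAt_eq_root_iff]
  simp only [List.mem_filterMap, ValidR, ValidAnnAt, concernedBy_iff]
  constructor
  · rintro (⟨s, ⟨⟨A, B, v⟩, he, hs⟩, hstep⟩ | ⟨-, hroot⟩)
    · right
      cases v with
      | Y =>
        obtain rfl := (Option.some_injective _ hs).symm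
        obtain ⟨-, hne, hB, hA⟩ := evalQ_annStep.mp hstep
        exact Or.inl ⟨_, he, rfl, hne, hB, hA⟩
      | N => cases hs
      | cond q =>
        obtain ⟨-, hne, hB, hq, hA⟩ := (evalQ_annStepSigma_cond hs).mp hstep
        exact Or.inr ⟨q, ⟨_, he, rfl, hne, hB, hA⟩, hq⟩
    · exact Or.inl hroot
  · rintro (rfl | ⟨⟨A, B, v⟩, he, rfl, hne, hB, hA⟩ |
      ⟨q, ⟨⟨A, B, v⟩, he, rfl, hne, hB, hA⟩, hq⟩)
    · exact Or.inr ⟨hy, rfl⟩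
    · exact Or.inl ⟨_, ⟨_, he, rfl⟩, evalQ_annStep.mpr ⟨hy, hne, hB, hA⟩⟩
    · exact Or.inl ⟨_, ⟨_, he, rfl⟩,
        (evalQ_annStepSigma_cond rfl).mpr ⟨hy, hne, hB, hq, hA⟩⟩

lemma evalP_ancestorOrSelf_qual1 {S : AccessSpec} {T : XTree} (hT : Conforms T S.D)
    {m : Pos} (hm : T.IsNode m) (hel : (typeAt T m).isSome) :
    evalP T (fun _ => True)
        (XPath.filter (XPath.axis Axis.ancestorOrSelf NodeTest.star) (qual1 S)) m =
      {y | y <+: m ∧ ConcernedR S T y} := by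
  ext y
  simp only [evalP, AxisRel, TestOk, and_true, Set.mem_ofPred_eq,
    ← prefix_iff_eq_or_strictAnc]
  constructor
  · rintro ⟨⟨hy, hym, -⟩, hc⟩
    exact ⟨hym, (evalQ_qual1_iff hT hy).mp hc⟩
  · rintro ⟨hym, hc⟩
    have hy := hm.of_prefix hym
    refine ⟨⟨hy, hym, ?_⟩, (evalQ_qual1_iff hT hy).mpr hc⟩
    rcases prefix_iff_eq_or_strictAnc.mp hym with rfl | hanc
    · exact hel
    · exact hT.typeAt_isSome_of_strictAnc hm hanc

lemma condI_iff_validR_of_deepest {S : AccessSpec} {T : XTree} {m y₀ : Pos}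
    (hy₀m : y₀ <+: m) (hy₀ : ConcernedR S T y₀)
    (hdeep : ∀ y, y <+: m → ConcernedR S T y → y <+: y₀) :
    CondI S T m ↔ ValidR S T y₀ := by
  rcases prefix_iff_eq_or_strictAnc.mp hy₀m with rfl | hanc
  · simp [CondI, hy₀]
  have hm : ¬ ConcernedR S T m := fun h => hanc.not_prefix (hdeep m List.prefix_rfl h)
  constructor
  · rintro (⟨hc, -⟩ | ⟨-, w, hw, hwc, hwv, hnear⟩)
    · exact absurd hc hm
    · obtain rfl | hwy₀ := prefix_iff_eq_or_strictAnc.mp (hdeep w hw.1 hwc)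
      · exact hwv
      · have hy₀c : Concerned S T y₀ := hy₀.resolve_left fun h =>
          hwy₀.not_prefix (by rw [h]; exact List.nil_prefix)
        exact absurd hy₀c (hnear y₀ hwy₀ hanc)
  · intro hv
    exact Or.inr ⟨hm, y₀, hanc, hy₀, hv, fun z hy₀z hzm hz =>
      hy₀z.not_prefix (hdeep z hzm.1 (Or.inr hz))⟩

lemma evalQ_A1acc_iff_condI {S : AccessSpec} {T : XTree} (hT : Conforms T S.D) {m : Pos}
    (hm : T.IsNode m) (hel : (typeAt T m).isSome) :
    evalQ T (fun _ => True) (XQual.path (A1acc S)) m ↔ CondI S T m := by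
  have hsub : ∀ y ∈ {y | y <+: m ∧ ConcernedR S T y}, y <+: m := fun y hy => hy.1
  obtain ⟨y₀, ⟨hy₀m, hy₀⟩, hdeep⟩ :=
    exists_deepest_of_prefix hsub ⟨[], List.nil_prefix, Or.inl rfl⟩
  simp only [A1acc, evalQ, Set.Nonempty, mem_evalP_filter, evalP_pos,
    evalP_ancestorOrSelf_qual1 hT hm hel, nthRev_one_eq_singleton hsub ⟨hy₀m, hy₀⟩ hdeep,
    Set.mem_singleton_iff, exists_eq_left]
  rw [evalQ_qual2_iff hT (hm.of_prefix hy₀m),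
    condI_iff_validR_of_deepest hy₀m hy₀ fun y hym hy => hdeep y ⟨hym, hy⟩]

lemma Accessible.accessible_iff_evalQ_A1acc {S : AccessSpec} {T : XTree}
    (hT : Conforms T S.D) {n m : Pos} (hn : Accessible S T n) (h : StrictAnc m n) :
    Accessible S T m ↔ evalQ T (fun _ => True) (XQual.path (A1acc S)) m := by
  have hm := hn.1.of_prefix h.1
  rw [evalQ_A1acc_iff_condI hT hm (hT.typeAt_isSome_of_strictAnc hn.1 h)]
  exact ⟨fun hacc => hacc.2.1,
    fun hI => ⟨hm, hI, fun m' q hm' => hn.2.2 m' q (hm'.trans_prefix h.1)⟩⟩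

lemma evalP_Aplus {S : AccessSpec} {T : XTree} (hT : Conforms T S.D) {n : Pos}
    (hn : Accessible S T n) :
    evalP T (fun _ => True) (Aplus S) n = {y | StrictAnc y n ∧ Accessible S T y} := by
  ext y
  simp only [Aplus, evalP, AxisRel, TestOk, and_true, Set.mem_ofPred_eq]
  constructor
  · rintro ⟨⟨-, hyn, -⟩, hA⟩
    exact ⟨hyn, (hn.accessible_iff_evalQ_A1acc hT hyn).mpr hA⟩
  · rintro ⟨hyn, hy⟩
    exact ⟨⟨hy.1, hyn, hT.typeAt_isSome_of_strictAnc hn.1 hyn⟩,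
      (hn.accessible_iff_evalQ_A1acc hT hyn).mp hy⟩

/-- For any security view `V = (D_v, ann)`, any instance `T` of the
original DTD `D` with view `T_v`, any accessible element node `n` of `T`, and any
element type `B` : the parent of `n` in the view `T_v` — i.e. the nearest accessible
ancestor of `n` in `T` — is of type `B` iff `n ⊨ A^B` in `T`, where
`A^B := A⁺[1]/ε::B` and `A⁺ := ↑⁺::*[A₁^acc]`. -/
theorem AB_characterizes_view_parent (S : AccessSpec) (T : XTree)
    (hT : Conforms T S.D) (n : Pos) (hacc : Accessible S T n) (B : Name) :
    ((∃ m, StrictAnc m n ∧ Accessible S T m ∧ typeAt T m = some B ∧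
        ∀ z, StrictAnc m z → StrictAnc z n → ¬ Accessible S T z) ↔
      evalQ T (fun _ => True) (XQual.path (AB S B)) n) := by
  have hsub : ∀ y ∈ {y | StrictAnc y n ∧ Accessible S T y}, y <+: n := fun y hy => hy.1.1
  simp only [AB, evalQ, Set.Nonempty, mem_evalP_seq, evalP_pos, evalP_Aplus hT hacc,
    mem_nthRev_one_iff hsub, mem_evalP_self, TestOk]
  constructor
  · rintro ⟨m, hmn, hm, hB, hnear⟩
    exact ⟨m, m, ⟨⟨hmn, hm⟩, fun z hz hmz => hnear z hmz hz.1 hz.2⟩, rfl, hm.1, hB⟩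
  · rintro ⟨-, m, ⟨⟨hmn, hm⟩, hnear⟩, -, -, hB⟩
    exact ⟨m, hmn, hm, hB, fun z hmz hzn hz => hnear z ⟨hzn, hz⟩ hmz⟩
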